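/- For any positive integer m, Robbins' bounds hold: √(2π)·m^{m+1/2}·exp(−m + 1/(12m+1)) ≤ m! ≤ √(2π)·m^{m+1/2}·exp(−m + 1/(12m)). -/
import Mathlib
open Real Filter Nat Stirling Topology

lemma two_k_lt (k : ℕ) : (2 * (↑(k+1):ℝ) + 1) ≤ 3 ^ (k+1) := by
  have := one_add_mul_le_pow (a := (2:ℝ)) (by norm_num) (k+1)
  push_cast at this ⊢
  calc (2 * ((k:ℝ)+1) + 1) = 1 + ((k:ℝ)+1) * 2 := by ring
  _ ≤ (1+2)^(k+1) := this
  _ = 3 ^ (k+1) := by norm_num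

lemma diff_lower (n : ℕ) :
    1 / (12 * (↑(n+1):ℝ) + 1) - 1 / (12 * (↑(n+2):ℝ) + 1) ≤
      Real.log (stirlingSeq (n+1)) - Real.log (stirlingSeq (n+2)) := by
  set t2 : ℝ := ((1 : ℝ) / (2 * ↑(n + 1) + 1)) ^ 2 with ht2
  have hx : (0:ℝ) < (n:ℝ) + 1 := by positivity
  have ht2pos : 0 < t2 := by positivity
  have hr : 0 ≤ t2 / 3 := by positivity
  have hrlt : t2 / 3 < 1 := by
    have : t2 < 1 := by
      rw [ht2, one_div, inv_pow]
      exact inv_lt_one_of_one_lt₀ (one_lt_pow₀ (by push_cast; nlinarith) two_ne_zero)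
    linarith
  have g : HasSum (fun k : ℕ => (t2/3) ^ (k+1)) ((t2/3) * (1 - t2/3)⁻¹) := by
    have := (hasSum_geometric_of_lt_one hr hrlt).mul_left (t2/3)
    simp_rw [← _root_.pow_succ'] at this
    exact this
  have hab : ∀ k : ℕ, (t2/3) ^ (k+1) ≤ (1 : ℝ) / (2 * ↑(k + 1) + 1) * t2 ^ (k+1) := by
    intro k
    have h1 : (1:ℝ)/3^(k+1) ≤ 1/(2*(↑(k+1):ℝ)+1) :=
      one_div_le_one_div_of_le (by positivity) (two_k_lt k)
    calc (t2/3) ^ (k+1) = (1/3^(k+1)) * t2 ^ (k+1) := by rw [div_pow]; ring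
    _ ≤ (1/(2*(↑(k+1):ℝ)+1)) * t2 ^ (k+1) :=
      mul_le_mul_of_nonneg_right h1 (by positivity)
  have key := hasSum_le hab g (log_stirlingSeq_diff_hasSum n)
  refine le_trans ?_ key
  push_cast [ht2]
  set x : ℝ := (n:ℝ) with hxx
  have hx0 : (0:ℝ) ≤ x := n.cast_nonneg
  have h1 : (0:ℝ) < 2*x+3 := by linarith
  have h2 : (0:ℝ) < 1 - (1/(2*x+3))^2/3 := by
    rw [sub_pos, div_pow, one_pow, div_div]
    rw [div_lt_one (by positivity)]
    nlinarith
  have hB1 : (0:ℝ) < 3*(2*x+3)^2 - 1 := by nlinarith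
  have h4 : (1/(2*x+3))^2/3 * (1 - (1/(2*x+3))^2/3)⁻¹ = 1/(3*(2*x+3)^2 - 1) := by
    rw [mul_inv_eq_iff_eq_mul₀ h2.ne', div_eq_iff (by norm_num : (3:ℝ) ≠ 0)]
    field_simp
  have e1 : (2 * (x+1) + 1) = 2*x+3 := by ring
  rw [e1, h4]
  rw [div_sub_div _ _ (by linarith) (by linarith), div_le_div_iff₀ (by positivity) (by nlinarith)]
  nlinarith [sq_nonneg x]

lemma diff_upper (n : ℕ) :
    Real.log (stirlingSeq (n+1)) - Real.log (stirlingSeq (n+2)) ≤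
      1 / (12 * (↑(n+1):ℝ)) - 1 / (12 * (↑(n+2):ℝ)) := by
  set t2 : ℝ := ((1 : ℝ) / (2 * ↑(n + 1) + 1)) ^ 2 with ht2
  have hx : (0:ℝ) < (n:ℝ) + 1 := by positivity
  have ht2pos : 0 < t2 := by positivity
  have ht2lt : t2 < 1 := by
    rw [ht2, one_div, inv_pow]
    exact inv_lt_one_of_one_lt₀ (one_lt_pow₀ (by push_cast; nlinarith) two_ne_zero)
  have g : HasSum (fun k : ℕ => (1/3 : ℝ) * t2 ^ (k+1)) ((1/3) * (t2 * (1 - t2)⁻¹)) := by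
    have := (hasSum_geometric_of_lt_one ht2pos.le ht2lt).mul_left t2
    simp_rw [← _root_.pow_succ'] at this
    exact this.mul_left (1/3)
  have hab : ∀ k : ℕ, (1 : ℝ) / (2 * ↑(k + 1) + 1) * t2 ^ (k+1) ≤ (1/3 : ℝ) * t2 ^ (k+1) := by
    intro k
    have h1 : (1:ℝ)/(2*(↑(k+1):ℝ)+1) ≤ 1/3 :=
      one_div_le_one_div_of_le (by norm_num) (by push_cast; linarith [k.cast_nonneg (α := ℝ)])
    exact mul_le_mul_of_nonneg_right h1 (by positivity)
  have key := hasSum_le hab (log_stirlingSeq_diff_hasSum n) g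
  refine key.trans ?_
  push_cast [ht2]
  set x : ℝ := (n:ℝ) with hxx
  have hx0 : (0:ℝ) ≤ x := n.cast_nonneg
  have h1 : (0:ℝ) < 2*x+3 := by linarith
  have h2 : (0:ℝ) < 1 - (1/(2*x+3))^2 := by
    rw [sub_pos, div_pow, one_pow, div_lt_one (by positivity)]
    nlinarith
  have e1 : (2 * (x+1) + 1) = 2*x+3 := by ring
  rw [e1]
  have hB1 : (0:ℝ) < (2*x+3)^2 - 1 := by nlinarith
  have h4 : (1/3 : ℝ) * ((1/(2*x+3))^2 * (1 - (1/(2*x+3))^2)⁻¹) = 1/(3*((2*x+3)^2 - 1)) := by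
    field_simp
  rw [h4, div_sub_div _ _ (by linarith) (by linarith),
    div_le_div_iff₀ (by positivity) (by positivity)]
  nlinarith [sq_nonneg x]

lemma tends_zero : Tendsto (fun n : ℕ => Real.log (stirlingSeq (n+1))) atTop (𝓝 (Real.log (Real.sqrt π))) :=
  (tendsto_stirlingSeq_sqrt_pi.comp (tendsto_add_atTop_nat 1)).log (by positivity)

lemma aux_tendsto (c : ℝ) (hc : 0 < c) :
    Tendsto (fun n : ℕ => 1 / (12 * (↑(n+1):ℝ) + c)) atTop (𝓝 0) := by
  apply squeeze_zero (fun n => by positivity) (g := fun n : ℕ => 1 / ((n:ℝ)+1))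
  · intro n
    apply one_div_le_one_div_of_le (by positivity)
    push_cast
    nlinarith [n.cast_nonneg (α := ℝ)]
  · exact tendsto_one_div_add_atTop_nhds_zero_nat

lemma aux_tendsto' : Tendsto (fun n : ℕ => 1 / (12 * (↑(n+1):ℝ))) atTop (𝓝 0) := by
  apply squeeze_zero (fun n => by positivity) (g := fun n : ℕ => 1 / ((n:ℝ)+1))
  · intro n
    apply one_div_le_one_div_of_le (by positivity)
    push_cast
    nlinarith [n.cast_nonneg (α := ℝ)]
  · exact tendsto_one_div_add_atTop_nhds_zero_nat

lemma stirling_le (n : ℕ) :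
    Real.log (stirlingSeq (n+1)) ≤ Real.log (Real.sqrt π) + 1 / (12 * (↑(n+1):ℝ)) := by
  have hmono : Monotone (fun n : ℕ => Real.log (stirlingSeq (n+1)) - 1 / (12 * (↑(n+1):ℝ))) := by
    apply monotone_nat_of_le_succ
    intro k
    show Real.log (stirlingSeq (k+1)) - 1/(12*(↑(k+1):ℝ)) ≤
      Real.log (stirlingSeq (k+2)) - 1/(12*(↑(k+2):ℝ))
    linarith [diff_upper k]
  have htend : Tendsto (fun n : ℕ => Real.log (stirlingSeq (n+1)) - 1 / (12 * (↑(n+1):ℝ)))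
      atTop (𝓝 (Real.log (Real.sqrt π))) := by
    have := tends_zero.sub aux_tendsto'
    simpa using this
  have := hmono.ge_of_tendsto htend n
  linarith

lemma le_stirling (n : ℕ) :
    Real.log (Real.sqrt π) + 1 / (12 * (↑(n+1):ℝ) + 1) ≤ Real.log (stirlingSeq (n+1)) := by
  have hanti : Antitone (fun n : ℕ => Real.log (stirlingSeq (n+1)) - 1 / (12 * (↑(n+1):ℝ) + 1)) := by
    apply antitone_nat_of_succ_le
    intro k
    show Real.log (stirlingSeq (k+2)) - 1/(12*(↑(k+2):ℝ)+1) ≤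
      Real.log (stirlingSeq (k+1)) - 1/(12*(↑(k+1):ℝ)+1)
    linarith [diff_lower k]
  have htend : Tendsto (fun n : ℕ => Real.log (stirlingSeq (n+1)) - 1 / (12 * (↑(n+1):ℝ) + 1))
      atTop (𝓝 (Real.log (Real.sqrt π))) := by
    have := tends_zero.sub (aux_tendsto 1 one_pos)
    simpa using this
  have := hanti.le_of_tendsto htend n
  linarith

lemma rhs_eq (n : ℕ) (c : ℝ) :
    Real.sqrt (2*π) * (↑(n+1):ℝ) ^ ((↑(n+1):ℝ) + 1/2) * Real.exp (-(↑(n+1):ℝ) + c)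
      = (Real.sqrt π * Real.exp c)
        * (Real.sqrt (2*(↑(n+1):ℝ)) * ((↑(n+1):ℝ)/Real.exp 1)^(n+1)) := by
  have hM : (0:ℝ) < (↑(n+1):ℝ) := by positivity
  rw [Real.rpow_add hM, Real.rpow_natCast, ← Real.sqrt_eq_rpow,
    Real.sqrt_mul (by norm_num : (0:ℝ) ≤ 2) π, Real.sqrt_mul (by norm_num : (0:ℝ) ≤ 2),
    Real.exp_add, div_pow, Real.exp_neg, Real.exp_one_pow]
  have h0 : Real.exp (↑(n+1):ℝ) ≠ 0 := (Real.exp_pos _).ne'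
  field_simp


/-- Robbins' bounds:
`√(2π)·m^(m+1/2)·exp(−m + 1/(12m+1)) ≤ m! ≤ √(2π)·m^(m+1/2)·exp(−m + 1/(12m))`. -/
theorem stmt_3 (m : ℕ) (hm : 0 < m) :
    Real.sqrt (2 * Real.pi) * (m : ℝ) ^ ((m : ℝ) + 1 / 2)
        * Real.exp (-(m : ℝ) + 1 / (12 * (m : ℝ) + 1)) ≤ (m.factorial : ℝ) ∧
    (m.factorial : ℝ) ≤ Real.sqrt (2 * Real.pi) * (m : ℝ) ^ ((m : ℝ) + 1 / 2)
        * Real.exp (-(m : ℝ) + 1 / (12 * (m : ℝ))) := by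
  obtain ⟨n, rfl⟩ := Nat.exists_eq_succ_of_ne_zero hm.ne'
  have hpos : 0 < stirlingSeq (n+1) := stirlingSeq'_pos n
  have hfac : 0 ≤ Real.sqrt (2*(↑(n+1):ℝ)) * ((↑(n+1):ℝ)/Real.exp 1)^(n+1) := by positivity
  have hfact : ((n+1)! : ℝ) = stirlingSeq (n+1)
      * (Real.sqrt (2*(↑(n+1):ℝ)) * ((↑(n+1):ℝ)/Real.exp 1)^(n+1)) := by
    rw [stirlingSeq]
    have : Real.sqrt (2*(↑(n+1):ℝ)) * ((↑(n+1):ℝ)/Real.exp 1)^(n+1) ≠ 0 := by positivity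
    field_simp
  have key : ∀ c : ℝ, Real.sqrt π * Real.exp c = Real.exp (Real.log (Real.sqrt π) + c) := by
    intro c
    rw [Real.exp_add, Real.exp_log (by positivity)]
  have h1 : Real.sqrt π * Real.exp (1/(12*(↑(n+1):ℝ)+1)) ≤ stirlingSeq (n+1) := by
    rw [key]
    calc Real.exp (Real.log (Real.sqrt π) + 1/(12*(↑(n+1):ℝ)+1))
        ≤ Real.exp (Real.log (stirlingSeq (n+1))) := Real.exp_le_exp.mpr (le_stirling n)
      _ = stirlingSeq (n+1) := Real.exp_log hpos
  have h2 : stirlingSeq (n+1) ≤ Real.sqrt π * Real.exp (1/(12*(↑(n+1):ℝ))) := by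
    rw [key]
    calc stirlingSeq (n+1) = Real.exp (Real.log (stirlingSeq (n+1))) := (Real.exp_log hpos).symm
      _ ≤ Real.exp (Real.log (Real.sqrt π) + 1/(12*(↑(n+1):ℝ))) :=
        Real.exp_le_exp.mpr (stirling_le n)
  constructor
  · rw [rhs_eq n _, hfact]
    exact mul_le_mul_of_nonneg_right h1 hfac
  · rw [rhs_eq n _, hfact]
    exact mul_le_mul_of_nonneg_right h2 hfac
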